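/- Let a ∈ ℝ, λ > 1, and let f : ℝ → ℝ be continuously differentiable with f'(x) ≥ 0 for all x. Then there exists a global classical solution φ : ℝ × [0,∞) → ℝ of the damped Burgers equation with initial data f; it is determined by the implicit relation φ(x + f(x)·B(t), t) = f(x)/A(t), where for each t ≥ 0 the map x ↦ x + f(x)·B(t) is a strictly increasing C¹ bijection of ℝ onto ℝ. (When the initial slope is everywhere nonnegative, the weak damping case λ > 1 still admits a global smooth solution.) -/

import Mathlib

/-- `A(t) = exp((a/(λ−1))·(1 − (1+t)^(1−λ)))`, i.e. `A(t) = exp(∫₀ᵗ a/(1+s)^λ ds)`. -/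
noncomputable def dampA (a lam t : ℝ) : ℝ :=
  Real.exp (a / (lam - 1) * (1 - (1 + t) ^ (1 - lam)))

/-- `B(t) = ∫₀ᵗ A(s)⁻¹ ds = ∫₀ᵗ exp((a/(λ−1))·((1+s)^(1−λ) − 1)) ds`. -/
noncomputable def dampB (a lam t : ℝ) : ℝ :=
  ∫ s in (0:ℝ)..t, Real.exp (a / (lam - 1) * ((1 + s) ^ (1 - lam) - 1))

/-- `φ : ℝ × I → ℝ` (written in curried form `φ x t`) is a classical (C¹) solution of the
damped Burgers equation `∂_t φ + φ ∂_x φ = −a·φ/(1+t)^λ` on the time interval `I`,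
with initial data `f`; `φx` and `φt` are its (continuous) partial derivatives. -/
def IsDampedBurgersSol (a lam : ℝ) (f : ℝ → ℝ) (I : Set ℝ) (φ φx φt : ℝ → ℝ → ℝ) : Prop :=
  (∀ x : ℝ, φ x 0 = f x) ∧
  (∀ x : ℝ, ∀ t ∈ I, HasDerivAt (fun y => φ y t) (φx x t) x) ∧
  (∀ x : ℝ, ∀ t ∈ I, HasDerivWithinAt (fun s => φ x s) (φt x t) I t) ∧
  ContinuousOn (fun p : ℝ × ℝ => φ p.1 p.2) (Set.univ ×ˢ I) ∧
  ContinuousOn (fun p : ℝ × ℝ => φx p.1 p.2) (Set.univ ×ˢ I) ∧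
  ContinuousOn (fun p : ℝ × ℝ => φt p.1 p.2) (Set.univ ×ˢ I) ∧
  (∀ x : ℝ, ∀ t ∈ I, φt x t + φ x t * φx x t = -a * φ x t / (1 + t) ^ lam)

/-
Along the characteristics `x ↦ x + f x * B(t)` the quantity `A(t) φ` is transported unchanged,
so `φ(y, t) = f(ξ) / A(t)` with `ξ` the foot of the characteristic through `(y, t)`. Since
`f' ≥ 0` and `B ≥ 0`, each map `x ↦ x + f x * B(t)` has slope at least `1`: characteristics never
cross and `ξ` is defined for all times. The implicit function theorem, applied to
`(x, t) ↦ x + f x * B(t)` whose `x`-derivative `1 + f'(ξ) B(t)` is positive, makes `ξ` a `C¹`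
function of `(y, t)`, and the equation follows from the chain rule together with `B' = 1 / A` and
`A' = a A / (1 + t)^λ`.
-/

open Topology Filter ContinuousLinearMap Set

theorem exists_implicitFunction_of_hasStrictFDerivAt {F : ℝ → ℝ → ℝ} {x₀ t₀ Fx Ft : ℝ}
    (hF : HasStrictFDerivAt (fun q : ℝ × ℝ => F q.1 q.2) (Fx • fst ℝ ℝ ℝ + Ft • snd ℝ ℝ ℝ)
      (x₀, t₀))
    (hFx : Fx ≠ 0) :
    ∃ ψ : ℝ × ℝ → ℝ, ψ (F x₀ t₀, t₀) = x₀ ∧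
      HasStrictFDerivAt ψ (Fx⁻¹ • fst ℝ ℝ ℝ + (-Ft / Fx) • snd ℝ ℝ ℝ) (F x₀ t₀, t₀) ∧
      ∀ᶠ q in 𝓝 (F x₀ t₀, t₀), F (ψ q) q.2 = q.1 := by
  -- Mathlib's implicit function for `((y, t), x) ↦ F x t - y`, solved for `x`.
  set u : (ℝ × ℝ) × ℝ := ((F x₀ t₀, t₀), x₀)
  have hswap : HasStrictFDerivAt (fun v : (ℝ × ℝ) × ℝ => (v.2, v.1.2))
      ((snd ℝ (ℝ × ℝ) ℝ).prod (snd ℝ ℝ ℝ ∘L fst ℝ (ℝ × ℝ) ℝ)) u :=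
    hasStrictFDerivAt_snd.prodMk (hasStrictFDerivAt_snd.comp u hasStrictFDerivAt_fst)
  have hG : HasStrictFDerivAt (fun v : (ℝ × ℝ) × ℝ => F v.2 v.1.2 - v.1.1)
      (Fx • snd ℝ (ℝ × ℝ) ℝ + Ft • (snd ℝ ℝ ℝ ∘L fst ℝ (ℝ × ℝ) ℝ) -
        fst ℝ ℝ ℝ ∘L fst ℝ (ℝ × ℝ) ℝ) u :=
    ((hF.comp u hswap).sub (hasStrictFDerivAt_fst.comp u hasStrictFDerivAt_fst)).congr_fderiv
      (by ext <;> simp)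
  have hpartial : (Fx • snd ℝ (ℝ × ℝ) ℝ + Ft • (snd ℝ ℝ ℝ ∘L fst ℝ (ℝ × ℝ) ℝ) -
        fst ℝ ℝ ℝ ∘L fst ℝ (ℝ × ℝ) ℝ) ∘L inr ℝ (ℝ × ℝ) ℝ = Fx • ContinuousLinearMap.id ℝ ℝ := by
    ext; simp
  have hcomp : (Fx⁻¹ • ContinuousLinearMap.id ℝ ℝ) ∘L (Fx • ContinuousLinearMap.id ℝ ℝ) = .id ℝ ℝ ∧
      (Fx • ContinuousLinearMap.id ℝ ℝ) ∘L (Fx⁻¹ • ContinuousLinearMap.id ℝ ℝ) = .id ℝ ℝ := by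
    constructor <;> ext <;> simp [hFx]
  have hI := IsInvertible.of_inverse hcomp.2 hcomp.1
  rw [← hpartial] at hI
  refine ⟨hG.implicitFunctionOfProdDomain hI, ?_, ?_, ?_⟩
  · exact ((hG.eventually_apply_eq_iff_implicitFunctionOfProdDomain hI).self_of_nhds).mp rfl
  · refine (hG.hasStrictFDerivAt_implicitFunctionOfProdDomain hI).congr_fderiv ?_
    rw [hpartial, inverse_eq hcomp.2 hcomp.1]
    ext <;> simp; ring
  · filter_upwards [hG.eventually_apply_implicitFunctionOfProdDomain hI] with q hq
    simpa [u, sub_eq_zero] using hq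

theorem hasFDerivWithinAt_of_implicit {F H : ℝ → ℝ → ℝ} {S : Set ℝ} {y₀ t₀ Fx Ft : ℝ}
    (hFH : ∀ y, ∀ t ∈ S, F (H y t) t = y) (hinj : ∀ t ∈ S, Function.Injective (F · t))
    (ht₀ : t₀ ∈ S)
    (hF : HasStrictFDerivAt (fun q : ℝ × ℝ => F q.1 q.2) (Fx • fst ℝ ℝ ℝ + Ft • snd ℝ ℝ ℝ)
      (H y₀ t₀, t₀))
    (hFx : Fx ≠ 0) :
    HasFDerivWithinAt (fun p : ℝ × ℝ => H p.1 p.2) (Fx⁻¹ • fst ℝ ℝ ℝ + (-Ft / Fx) • snd ℝ ℝ ℝ)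
      (univ ×ˢ S) (y₀, t₀) := by
  obtain ⟨ψ, hψ₀, hψ, hFψ⟩ := exists_implicitFunction_of_hasStrictFDerivAt hF hFx
  rw [hFH y₀ t₀ ht₀] at hψ₀ hψ hFψ
  refine hψ.hasFDerivAt.hasFDerivWithinAt.congr_of_eventuallyEq ?_ hψ₀.symm
  filter_upwards [nhdsWithin_le_nhds hFψ, self_mem_nhdsWithin] with q hq hqS
  exact hinj q.2 hqS.2 ((hFH q.1 q.2 hqS.2).trans hq.symm)

theorem HasFDerivWithinAt.hasDerivAt_partial_left {G : ℝ → ℝ → ℝ} {S : Set ℝ} {y t α β : ℝ}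
    (h : HasFDerivWithinAt (fun p : ℝ × ℝ => G p.1 p.2) (α • fst ℝ ℝ ℝ + β • snd ℝ ℝ ℝ)
      (univ ×ˢ S) (y, t)) (ht : t ∈ S) :
    HasDerivAt (G · t) α y := by
  have hline : HasDerivWithinAt (fun y' : ℝ => (y', t)) (1, 0) univ y :=
    ((hasDerivAt_id y).prodMk (hasDerivAt_const y t)).hasDerivWithinAt
  simpa [Function.comp_def] using
    (h.comp_hasDerivWithinAt y hline fun _ _ => mk_mem_prod trivial ht).hasDerivAt univ_mem

theorem HasFDerivWithinAt.hasDerivWithinAt_partial_right {G : ℝ → ℝ → ℝ} {S : Set ℝ}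
    {y t α β : ℝ}
    (h : HasFDerivWithinAt (fun p : ℝ × ℝ => G p.1 p.2) (α • fst ℝ ℝ ℝ + β • snd ℝ ℝ ℝ)
      (univ ×ˢ S) (y, t)) :
    HasDerivWithinAt (G y ·) β S t := by
  have hline : HasDerivWithinAt (fun t' : ℝ => (y, t')) (0, 1) S t :=
    ((hasDerivAt_const t y).prodMk (hasDerivAt_id t)).hasDerivWithinAt
  simpa [Function.comp_def] using h.comp_hasDerivWithinAt t hline fun _ hs => mk_mem_prod trivial hs

section Damping
variable (a lam : ℝ)

lemma dampA_zero : dampA a lam 0 = 1 := by simp [dampA]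

lemma dampB_zero : dampB a lam 0 = 0 := by simp [dampB]

lemma dampA_pos (t : ℝ) : 0 < dampA a lam t := Real.exp_pos _

lemma dampB_nonneg {t : ℝ} (ht : 0 ≤ t) : 0 ≤ dampB a lam t :=
  intervalIntegral.integral_nonneg ht fun _ _ => (Real.exp_pos _).le

lemma inv_dampA (t : ℝ) :
    (dampA a lam t)⁻¹ = Real.exp (a / (lam - 1) * ((1 + t) ^ (1 - lam) - 1)) := by
  rw [dampA, ← Real.exp_neg]
  ring_nf

lemma continuousOn_dampA : ContinuousOn (dampA a lam) (Ioi (-1)) := by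
  intro t ht
  have h1 : (1 : ℝ) + t ≠ 0 := by linarith [mem_Ioi.1 ht]
  have hpow : ContinuousAt (fun s : ℝ => (1 + s) ^ (1 - lam)) t :=
    (continuousAt_const.add continuousAt_id).rpow_const (Or.inl h1)
  exact (continuousAt_const.mul (continuousAt_const.sub hpow)).rexp.continuousWithinAt

lemma hasStrictDerivAt_dampB {t : ℝ} (ht : -1 < t) :
    HasStrictDerivAt (dampB a lam) (dampA a lam t)⁻¹ t := by
  have hcont : ContinuousOn (fun s => (dampA a lam s)⁻¹) (Ioi (-1)) :=
    (continuousOn_dampA a lam).inv₀ fun s _ => (dampA_pos a lam s).ne'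
  have hB : dampB a lam = fun t => ∫ s in (0 : ℝ)..t, (dampA a lam s)⁻¹ := by
    simp only [inv_dampA]; rfl
  rw [hB]
  refine intervalIntegral.integral_hasStrictDerivAt_right ?_
    (hcont.stronglyMeasurableAtFilter isOpen_Ioi t ht) (hcont.continuousAt (Ioi_mem_nhds ht))
  exact (hcont.mono (ordConnected_Ioi.uIcc_subset (by norm_num) ht)).intervalIntegrable

lemma hasDerivAt_dampA (hlam : lam ≠ 1) {t : ℝ} (ht : -1 < t) :
    HasDerivAt (dampA a lam) (dampA a lam t * (a / (1 + t) ^ lam)) t := by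
  have h1 : 0 < 1 + t := by linarith
  have hpow := ((hasDerivAt_id t).const_add 1).rpow_const (p := 1 - lam) (Or.inl h1.ne')
  refine ((hpow.const_sub 1).const_mul (a / (lam - 1))).exp.congr_deriv ?_
  have hexp : (1 + t) ^ (1 - lam - 1) = ((1 + t) ^ lam)⁻¹ := by
    rw [sub_sub_cancel_left, Real.rpow_neg h1.le]
  have hlam' : lam - 1 ≠ 0 := sub_ne_zero.2 hlam
  simp only [dampA, id, hexp]
  field_simp
  ring

lemma continuousOn_dampB : ContinuousOn (dampB a lam) (Ioi (-1)) :=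
  fun _ ht => (hasStrictDerivAt_dampB a lam ht).hasDerivAt.continuousAt.continuousWithinAt

end Damping

lemma ContinuousOn.comp_snd_of_Ioi {g : ℝ → ℝ} (hg : ContinuousOn g (Ioi (-1))) :
    ContinuousOn (fun p : ℝ × ℝ => g p.2) (univ ×ˢ Ici 0) :=
  hg.comp continuousOn_snd fun _ hp => mem_Ioi.2 (lt_of_lt_of_le neg_one_lt_zero hp.2)

lemma surjective_add_of_monotone {h : ℝ → ℝ} (hc : Continuous h) (hm : Monotone h) :
    Function.Surjective fun x => x + h x :=
  (continuous_id.add hc).surjective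
    (tendsto_atTop_add_right_of_le' _ (h 0) tendsto_id
      ((eventually_ge_atTop 0).mono fun _ hx => hm hx))
    (tendsto_atBot_add_right_of_ge' _ (h 0) tendsto_id
      ((eventually_le_atBot 0).mono fun _ hx => hm hx))

section Characteristics
variable {a lam : ℝ} {f : ℝ → ℝ}

lemma strictMono_characteristic (hf : Monotone f) {t : ℝ} (ht : 0 ≤ t) :
    StrictMono fun x => x + f x * dampB a lam t :=
  strictMono_id.add_monotone (hf.mul_const (dampB_nonneg a lam ht))

lemma bijective_characteristic (hf : Monotone f) (hc : Continuous f) {t : ℝ} (ht : 0 ≤ t) :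
    Function.Bijective fun x => x + f x * dampB a lam t :=
  ⟨(strictMono_characteristic hf ht).injective,
    surjective_add_of_monotone (hc.mul continuous_const) (hf.mul_const (dampB_nonneg a lam ht))⟩

lemma hasDerivAt_characteristic (hf : Differentiable ℝ f) (b x : ℝ) :
    HasDerivAt (fun y => y + f y * b) (1 + deriv f x * b) x :=
  (hasDerivAt_id x).add ((hf x).hasDerivAt.mul_const b)

lemma hasStrictFDerivAt_characteristic (hf : ContDiff ℝ 1 f) {x t : ℝ} (ht : -1 < t) :
    HasStrictFDerivAt (fun q : ℝ × ℝ => q.1 + f q.1 * dampB a lam q.2)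
      ((1 + deriv f x * dampB a lam t) • fst ℝ ℝ ℝ + (f x * (dampA a lam t)⁻¹) • snd ℝ ℝ ℝ)
      (x, t) := by
  have hfx : HasStrictFDerivAt (fun q : ℝ × ℝ => f q.1) (deriv f x • fst ℝ ℝ ℝ) (x, t) :=
    (hf.contDiffAt.hasStrictDerivAt one_ne_zero).comp_hasStrictFDerivAt (x, t)
      hasStrictFDerivAt_fst
  have hBt : HasStrictFDerivAt (fun q : ℝ × ℝ => dampB a lam q.2)
      ((dampA a lam t)⁻¹ • snd ℝ ℝ ℝ) (x, t) :=
    (hasStrictDerivAt_dampB a lam ht).comp_hasStrictFDerivAt (f := Prod.snd) (x, t)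
      hasStrictFDerivAt_snd
  exact (hasStrictFDerivAt_fst.add (hfx.mul hBt)).congr_fderiv (by ext <;> simp; ring)

noncomputable def burgersFoot (a lam : ℝ) (f : ℝ → ℝ) (y t : ℝ) : ℝ :=
  Function.invFun (fun x => x + f x * dampB a lam t) y

lemma burgersFoot_add_mul (hf : Monotone f) (hc : Continuous f) {t : ℝ} (ht : 0 ≤ t) (y : ℝ) :
    burgersFoot a lam f y t + f (burgersFoot a lam f y t) * dampB a lam t = y :=
  Function.rightInverse_invFun (bijective_characteristic hf hc ht).2 y

lemma burgersFoot_characteristic (hf : Monotone f) {t : ℝ} (ht : 0 ≤ t) (x : ℝ) :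
    burgersFoot a lam f (x + f x * dampB a lam t) t = x :=
  Function.leftInverse_invFun (strictMono_characteristic hf ht).injective x

lemma hasFDerivWithinAt_burgersFoot (hf : ContDiff ℝ 1 f) (hf' : ∀ x, 0 ≤ deriv f x)
    {t : ℝ} (ht : 0 ≤ t) (x : ℝ) :
    HasFDerivWithinAt (fun p : ℝ × ℝ => burgersFoot a lam f p.1 p.2)
      ((1 + deriv f x * dampB a lam t)⁻¹ • fst ℝ ℝ ℝ +
        (-(f x * (dampA a lam t)⁻¹) / (1 + deriv f x * dampB a lam t)) • snd ℝ ℝ ℝ)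
      (univ ×ˢ Ici 0) (x + f x * dampB a lam t, t) := by
  have hmono := monotone_of_deriv_nonneg (hf.differentiable one_ne_zero) hf'
  refine hasFDerivWithinAt_of_implicit (F := fun x t => x + f x * dampB a lam t)
    (fun y _ ht => burgersFoot_add_mul hmono hf.continuous ht y)
    (fun _ ht => (strictMono_characteristic hmono ht).injective) ht ?_ ?_
  · rw [burgersFoot_characteristic hmono ht]
    exact hasStrictFDerivAt_characteristic hf (by linarith)
  · have := mul_nonneg (hf' x) (dampB_nonneg a lam ht)
    positivity

lemma continuousOn_burgersFoot (hf : ContDiff ℝ 1 f) (hf' : ∀ x, 0 ≤ deriv f x) :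
    ContinuousOn (fun p : ℝ × ℝ => burgersFoot a lam f p.1 p.2) (univ ×ˢ Ici 0) := by
  have hmono := monotone_of_deriv_nonneg (hf.differentiable one_ne_zero) hf'
  rintro ⟨y, t⟩ ⟨-, ht : 0 ≤ t⟩
  obtain ⟨x, rfl⟩ := (bijective_characteristic (a := a) (lam := lam) hmono hf.continuous ht).2 y
  exact (hasFDerivWithinAt_burgersFoot hf hf' ht x).continuousWithinAt

end Characteristics

section Solution
variable {a lam : ℝ} {f : ℝ → ℝ}

noncomputable def burgersSol (a lam : ℝ) (f : ℝ → ℝ) (y t : ℝ) : ℝ :=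
  f (burgersFoot a lam f y t) / dampA a lam t

noncomputable def burgersSolDx (a lam : ℝ) (f : ℝ → ℝ) (y t : ℝ) : ℝ :=
  deriv f (burgersFoot a lam f y t) /
    ((1 + deriv f (burgersFoot a lam f y t) * dampB a lam t) * dampA a lam t)

/-- The time derivative is defined through the equation itself;
`hasDerivWithinAt_burgersSol_time` shows that it is the actual one. -/
noncomputable def burgersSolDt (a lam : ℝ) (f : ℝ → ℝ) (y t : ℝ) : ℝ :=
  -a * burgersSol a lam f y t / (1 + t) ^ lam - burgersSol a lam f y t * burgersSolDx a lam f y t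

lemma burgersSol_characteristic (hf : Monotone f) {t : ℝ} (ht : 0 ≤ t) (x : ℝ) :
    burgersSol a lam f (x + f x * dampB a lam t) t = f x / dampA a lam t := by
  rw [burgersSol, burgersFoot_characteristic hf ht]

lemma burgersSol_zero (hf : Monotone f) (x : ℝ) : burgersSol a lam f x 0 = f x := by
  simpa [dampB_zero, dampA_zero] using burgersSol_characteristic (a := a) (lam := lam) hf le_rfl x

variable (hf : ContDiff ℝ 1 f) (hf' : ∀ x, 0 ≤ deriv f x)
include hf hf'

lemma hasDerivAt_burgersSol_space {t : ℝ} (ht : 0 ≤ t) (y : ℝ) :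
    HasDerivAt (burgersSol a lam f · t) (burgersSolDx a lam f y t) y := by
  have hmono := monotone_of_deriv_nonneg (hf.differentiable one_ne_zero) hf'
  obtain ⟨x, rfl⟩ := (bijective_characteristic (a := a) (lam := lam) hmono hf.continuous ht).2 y
  have hfoot := (hasFDerivWithinAt_burgersFoot (a := a) (lam := lam) hf hf' ht x
    ).hasDerivAt_partial_left (mem_Ici.2 ht)
  have hfx : HasDerivAt f (deriv f x) (burgersFoot a lam f (x + f x * dampB a lam t) t) := by
    rw [burgersFoot_characteristic hmono ht x]
    exact (hf.differentiable one_ne_zero x).hasDerivAt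
  refine ((hfx.comp (x + f x * dampB a lam t) hfoot).div_const (dampA a lam t)).congr_deriv ?_
  have := mul_nonneg (hf' x) (dampB_nonneg a lam ht)
  have := dampA_pos a lam t
  rw [burgersSolDx, burgersFoot_characteristic hmono ht x]
  field_simp

lemma hasDerivWithinAt_burgersSol_time (hlam : lam ≠ 1) {t : ℝ} (ht : 0 ≤ t) (y : ℝ) :
    HasDerivWithinAt (burgersSol a lam f y ·) (burgersSolDt a lam f y t) (Ici 0) t := by
  have hmono := monotone_of_deriv_nonneg (hf.differentiable one_ne_zero) hf'
  obtain ⟨x, rfl⟩ := (bijective_characteristic (a := a) (lam := lam) hmono hf.continuous ht).2 y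
  have hfoot := (hasFDerivWithinAt_burgersFoot (a := a) (lam := lam) hf hf' ht x
    ).hasDerivWithinAt_partial_right
  have hfx : HasDerivAt f (deriv f x) (burgersFoot a lam f (x + f x * dampB a lam t) t) := by
    rw [burgersFoot_characteristic hmono ht x]
    exact (hf.differentiable one_ne_zero x).hasDerivAt
  have hA := (hasDerivAt_dampA a lam hlam (by linarith : (-1 : ℝ) < t)).hasDerivWithinAt
    (s := Ici 0)
  refine ((hfx.comp_hasDerivWithinAt _ hfoot).div hA (dampA_pos a lam t).ne').congr_deriv ?_
  have := mul_nonneg (hf' x) (dampB_nonneg a lam ht)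
  have := dampA_pos a lam t
  have : 0 < (1 + t) ^ lam := by positivity
  simp only [burgersSolDt, burgersSolDx, burgersSol, Function.comp_apply,
    burgersFoot_characteristic hmono ht x]
  field_simp
  ring

lemma continuousOn_burgersSol :
    ContinuousOn (fun p : ℝ × ℝ => burgersSol a lam f p.1 p.2) (univ ×ˢ Ici 0) :=
  (hf.continuous.comp_continuousOn (continuousOn_burgersFoot (a := a) (lam := lam) hf hf')).div
    (continuousOn_dampA a lam).comp_snd_of_Ioi fun p _ => (dampA_pos a lam p.2).ne'

lemma continuousOn_burgersSolDx :
    ContinuousOn (fun p : ℝ × ℝ => burgersSolDx a lam f p.1 p.2) (univ ×ˢ Ici 0) := by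
  have hdf := (hf.continuous_deriv le_rfl).comp_continuousOn
    (continuousOn_burgersFoot (a := a) (lam := lam) hf hf')
  refine hdf.div ((continuousOn_const.add (hdf.mul (continuousOn_dampB a lam).comp_snd_of_Ioi)).mul
    (continuousOn_dampA a lam).comp_snd_of_Ioi) fun p hp => ?_
  have := mul_nonneg (hf' (burgersFoot a lam f p.1 p.2)) (dampB_nonneg a lam hp.2)
  have := dampA_pos a lam p.2
  positivity

lemma continuousOn_burgersSolDt :
    ContinuousOn (fun p : ℝ × ℝ => burgersSolDt a lam f p.1 p.2) (univ ×ˢ Ici 0) := by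
  have hpow : ContinuousOn (fun p : ℝ × ℝ => (1 + p.2) ^ lam) (univ ×ˢ Ici 0) :=
    (continuousOn_const.add continuousOn_snd).rpow_const fun p hp =>
      Or.inl (add_pos_of_pos_of_nonneg one_pos hp.2).ne'
  refine ((continuousOn_const.mul (continuousOn_burgersSol hf hf')).div hpow fun p hp => ?_).sub
    ((continuousOn_burgersSol hf hf').mul (continuousOn_burgersSolDx hf hf'))
  have : 0 < 1 + p.2 := add_pos_of_pos_of_nonneg one_pos hp.2
  positivity

theorem isDampedBurgersSol_burgersSol (hlam : lam ≠ 1) :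
    IsDampedBurgersSol a lam f (Ici 0)
      (burgersSol a lam f) (burgersSolDx a lam f) (burgersSolDt a lam f) :=
  ⟨burgersSol_zero (monotone_of_deriv_nonneg (hf.differentiable one_ne_zero) hf'),
    fun y _ ht => hasDerivAt_burgersSol_space hf hf' ht y,
    fun y _ ht => hasDerivWithinAt_burgersSol_time hf hf' hlam ht y,
    continuousOn_burgersSol hf hf', continuousOn_burgersSolDx hf hf',
    continuousOn_burgersSolDt hf hf', fun y t _ => by rw [burgersSolDt]; ring⟩

end Solution

/-- If the initial slope is everywhere nonnegative, the damped Burgers equation (weak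
damping case `λ > 1`) admits a global classical solution, determined by the implicit
relation `φ(x + f(x)·B(t), t) = f(x)/A(t)`, each map `x ↦ x + f(x)·B(t)` being a strictly
increasing C¹ bijection of `ℝ`. -/
theorem stmt11 (a lam : ℝ) (hlam : 1 < lam)
    (f : ℝ → ℝ) (hf : ContDiff ℝ 1 f) (hf' : ∀ x : ℝ, 0 ≤ deriv f x) :
    ∃ φ φx φt : ℝ → ℝ → ℝ,
      IsDampedBurgersSol a lam f (Set.Ici 0) φ φx φt ∧
      (∀ t : ℝ, 0 ≤ t →
        StrictMono (fun x => x + f x * dampB a lam t) ∧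
        Function.Bijective (fun x => x + f x * dampB a lam t) ∧
        (∀ x : ℝ,
          HasDerivAt (fun y => y + f y * dampB a lam t) (1 + deriv f x * dampB a lam t) x)) ∧
      (∀ x : ℝ, ∀ t : ℝ, 0 ≤ t →
        φ (x + f x * dampB a lam t) t = f x / dampA a lam t) := by
  have hmono : Monotone f := monotone_of_deriv_nonneg (hf.differentiable one_ne_zero) hf'
  exact ⟨burgersSol a lam f, burgersSolDx a lam f, burgersSolDt a lam f,
    isDampedBurgersSol_burgersSol hf hf' hlam.ne',
    fun t ht => ⟨strictMono_characteristic hmono ht,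
      bijective_characteristic hmono hf.continuous ht, hasDerivAt_characteristic (hf.differentiable one_ne_zero) _⟩,
    fun x t ht => burgersSol_characteristic hmono ht x⟩
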